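/- Let F ∈ 𝓗₊ ∪ 𝓗₋, η > 0, r_F := log F*(1,1) > 0, and M_F^{(η)} := max{Γ_F^{(1+η,1)}, Γ_F^{(0,2+η)}}. Then for all a ∈ [0, 1+η] and b ∈ [1, 2+η], one has Γ_F^{(a,b)} ≤ 2 M_F^{(η)} / (r_F)^{2+η−a−b}. -/

import Mathlib

open MeasureTheory Filter Set Real
open scoped Classical

/-- The class 𝓗₊. -/
def HPlus (F : ℝ → ℝ → ℝ) : Prop :=
  ContinuousOn (fun p : ℝ × ℝ => F p.1 p.2) {p | 0 < p.1 ∧ 0 < p.2} ∧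
  (∀ x y, 0 < x → 0 < y → 0 < F x y) ∧
  (∀ x x' y y', 0 < x → 0 < y → x ≤ x' → y ≤ y' → F x y ≤ F x' y') ∧
  (∀ a x y, 0 < a → 0 < x → 0 < y → F (a * x) (a * y) = a * F x y) ∧
  (∀ x y, 0 < x → 0 < y → max x y ≤ F x y) ∧
  (∀ y, 0 < y →
    Tendsto (fun x => F x y) (nhdsWithin 0 (Set.Ioi 0)) (nhds y) ∧
    Tendsto (fun x => F y x) (nhdsWithin 0 (Set.Ioi 0)) (nhds y))

/-- The class 𝓗₋. -/
def HMinus (F : ℝ → ℝ → ℝ) : Prop :=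
  ContinuousOn (fun p : ℝ × ℝ => F p.1 p.2) {p | 0 < p.1 ∧ 0 < p.2} ∧
  (∀ x y, 0 < x → 0 < y → 0 < F x y) ∧
  (∀ x x' y y', 0 < x → 0 < y → x ≤ x' → y ≤ y' → F x y ≤ F x' y') ∧
  (∀ a x y, 0 < a → 0 < x → 0 < y → F (a * x) (a * y) = a * F x y) ∧
  (∀ x y, 0 < x → 0 < y → F x y ≤ min x y) ∧
  (∀ y, 0 < y →
    Tendsto (fun x => F x y) atTop (nhds y) ∧
    Tendsto (fun x => F y x) atTop (nhds y))

/-- The associated element F* of 𝓗₊. -/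
noncomputable def Fstar (F : ℝ → ℝ → ℝ) : ℝ → ℝ → ℝ :=
  if HPlus F then F else fun x y => (F x⁻¹ y⁻¹)⁻¹

/-- T_F(t) := sup { z : F*(e^{-t}, e^{-z}) ≥ 1 }. -/
noncomputable def TF (F : ℝ → ℝ → ℝ) (t : ℝ) : ℝ :=
  sSup {z : ℝ | 1 ≤ Fstar F (Real.exp (-t)) (Real.exp (-z))}

/-- T_F^-(t) := inf { z : F*(e^{-t}, e^{-z}) ≤ 1 }. -/
noncomputable def TFminus (F : ℝ → ℝ → ℝ) (t : ℝ) : ℝ :=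
  sInf {z : ℝ | Fstar F (Real.exp (-t)) (Real.exp (-z)) ≤ 1}

/-- r_F := log F*(1,1). -/
noncomputable def rF (F : ℝ → ℝ → ℝ) : ℝ := Real.log (Fstar F 1 1)

/-- Γ_F^{(a,b)} := ∫₀^∞ t^a (T_F(t))^b dt, as an extended nonnegative real. -/
noncomputable def Gamma (F : ℝ → ℝ → ℝ) (a b : ℝ) : ENNReal :=
  ∫⁻ t in Set.Ioi (0 : ℝ), ENNReal.ofReal (t ^ a * (TF F t) ^ b)

/-- F^#(x,y) := F(y,x). -/
def Fsharp (F : ℝ → ℝ → ℝ) : ℝ → ℝ → ℝ := fun x y => F y x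

/-!
Write `r = r_F`. Homogeneity of `F*` gives `F*(e^{-s}, e^{-s}) = e^{r - s}`, so by monotonicity
`T_F ≥ r` on `(0, r]` and `0 ≤ T_F ≤ r` on `(r, ∞)`. Split `Γ_F^{(a,b)}` at `t = r`: on `(0, r]`
use `t ≤ r ≤ T_F(t)` to dominate `r^{2+η-a-b} t^a T_F^b` by `T_F^{2+η}`, and on `(r, ∞)` use
`T_F(t) ≤ r < t` to dominate it by `t^{1+η} T_F`. Hence `r^{2+η-a-b} Γ_F^{(a,b)}` is at most
`Γ_F^{(1+η,1)} + Γ_F^{(0,2+η)} ≤ 2 M_F^{(η)}`.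
-/

/-- The axioms of `𝓗₊` that `F*` satisfies for `F ∈ 𝓗₊ ∪ 𝓗₋`; of the boundary limits only
`exists_lt_one` survives, which is what keeps the level sets defining `T_F` bounded. -/
structure WeakHPlus (G : ℝ → ℝ → ℝ) : Prop where
  pos : ∀ x y, 0 < x → 0 < y → 0 < G x y
  mono : ∀ x x' y y', 0 < x → 0 < y → x ≤ x' → y ≤ y' → G x y ≤ G x' y'
  homog : ∀ a x y, 0 < a → 0 < x → 0 < y → G (a * x) (a * y) = a * G x y
  max_le : ∀ x y, 0 < x → 0 < y → max x y ≤ G x y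
  exists_lt_one : ∀ y, 0 < y → y < 1 → ∃ u, 0 < u ∧ G y u < 1

theorem HPlus.weakHPlus {F : ℝ → ℝ → ℝ} (hF : HPlus F) : WeakHPlus F := by
  obtain ⟨-, hpos, hmono, hhomog, hmax, hlim⟩ := hF
  refine ⟨hpos, hmono, hhomog, hmax, fun y hy hy1 => ?_⟩
  obtain ⟨u, hFu, hu⟩ :=
    (((hlim y hy).2.eventually_lt_const hy1).and self_mem_nhdsWithin).exists
  exact ⟨u, hu, hFu⟩

theorem HMinus.weakHPlus_inv {F : ℝ → ℝ → ℝ} (hF : HMinus F) :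
    WeakHPlus fun x y => (F x⁻¹ y⁻¹)⁻¹ := by
  obtain ⟨-, hpos, hmono, hhomog, hmin, hlim⟩ := hF
  have hpos' : ∀ x y : ℝ, 0 < x → 0 < y → 0 < F x⁻¹ y⁻¹ := fun x y hx hy =>
    hpos _ _ (inv_pos.2 hx) (inv_pos.2 hy)
  refine ⟨fun x y hx hy => inv_pos.2 (hpos' x y hx hy), ?_, ?_, ?_, ?_⟩
  · intro x x' y y' hx hy hxx' hyy'
    have hx' := hx.trans_le hxx'
    have hy' := hy.trans_le hyy'
    exact inv_anti₀ (hpos' x' y' hx' hy') <| hmono _ _ _ _ (inv_pos.2 hx') (inv_pos.2 hy')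
      (inv_anti₀ hx hxx') (inv_anti₀ hy hyy')
  · intro c x y hc hx hy
    simp only [mul_inv]
    rw [hhomog _ _ _ (inv_pos.2 hc) (inv_pos.2 hx) (inv_pos.2 hy), mul_inv, inv_inv]
  · intro x y hx hy
    have hmin_inv : min x⁻¹ y⁻¹ = (max x y)⁻¹ := by
      rcases le_total x y with h | h
      · rw [max_eq_right h, min_eq_right (inv_anti₀ hx h)]
      · rw [max_eq_left h, min_eq_left (inv_anti₀ hy h)]
    have h := hmin _ _ (inv_pos.2 hx) (inv_pos.2 hy)
    rw [hmin_inv] at h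
    simpa using inv_anti₀ (hpos' x y hx hy) h
  · intro y hy hy1
    have hlt : ∀ᶠ u in atTop, 1 < F y⁻¹ u :=
      (hlim _ (inv_pos.2 hy)).2.eventually_const_lt ((one_lt_inv₀ hy).2 hy1)
    obtain ⟨u, hFu, hu⟩ := (hlt.and (eventually_gt_atTop 0)).exists
    exact ⟨u⁻¹, inv_pos.2 hu, by simpa using inv_lt_one_of_one_lt₀ hFu⟩

theorem weakHPlus_Fstar {F : ℝ → ℝ → ℝ} (hF : HPlus F ∨ HMinus F) : WeakHPlus (Fstar F) := by
  unfold Fstar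
  split_ifs with h
  exacts [h.weakHPlus, (hF.resolve_left h).weakHPlus_inv]

theorem WeakHPlus.apply_exp_neg_self {G : ℝ → ℝ → ℝ} (hG : WeakHPlus G) (s : ℝ) :
    G (exp (-s)) (exp (-s)) = exp (log (G 1 1) - s) := by
  have h := hG.homog (exp (-s)) 1 1 (exp_pos _) one_pos one_pos
  rw [mul_one] at h
  rw [h, exp_sub, exp_log (hG.pos 1 1 one_pos one_pos), exp_neg]
  ring

section TF

variable {F : ℝ → ℝ → ℝ} (hF : WeakHPlus (Fstar F))
include hF

theorem zero_mem_levelSet_TF (t : ℝ) : (0 : ℝ) ∈ {z : ℝ | 1 ≤ Fstar F (exp (-t)) (exp (-z))} := by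
  simpa using (le_max_right _ _).trans (hF.max_le (exp (-t)) 1 (exp_pos _) one_pos)

theorem bddAbove_levelSet_TF {t : ℝ} (ht : 0 < t) :
    BddAbove {z : ℝ | 1 ≤ Fstar F (exp (-t)) (exp (-z))} := by
  obtain ⟨u, hu, hFu⟩ := hF.exists_lt_one _ (exp_pos _) (exp_lt_one_iff.2 (neg_lt_zero.2 ht))
  refine ⟨-log u, fun z hz => ?_⟩
  rw [mem_ofPred_eq] at hz
  by_contra! h
  have hzu : exp (-z) ≤ u := by
    rw [← exp_log hu]
    exact exp_le_exp.2 (by linarith)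
  linarith [hF.mono _ _ _ _ (exp_pos _) (exp_pos _) (le_refl (exp (-t))) hzu]

theorem TF_nonneg {t : ℝ} (ht : 0 < t) : 0 ≤ TF F t :=
  le_csSup (bddAbove_levelSet_TF hF ht) (zero_mem_levelSet_TF hF t)

theorem rF_le_TF {t : ℝ} (ht : 0 < t) (htr : t ≤ rF F) : rF F ≤ TF F t := by
  refine le_csSup (bddAbove_levelSet_TF hF ht) ?_
  have hmono := hF.mono _ (exp (-t)) _ (exp (-rF F)) (exp_pos _) (exp_pos _)
    (exp_le_exp.2 (neg_le_neg htr)) le_rfl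
  rw [hF.apply_exp_neg_self] at hmono
  simpa [rF] using hmono

theorem TF_le_rF {t : ℝ} (htr : rF F < t) : TF F t ≤ rF F := by
  refine csSup_le ⟨0, zero_mem_levelSet_TF hF t⟩ fun z hz => ?_
  rw [mem_ofPred_eq] at hz
  by_contra! hrz
  have hrm : rF F < min t z := lt_min htr hrz
  have hmono := hF.mono (exp (-t)) (exp (-min t z)) (exp (-z)) (exp (-min t z))
    (exp_pos _) (exp_pos _) (exp_le_exp.2 (by simp)) (exp_le_exp.2 (by simp))
  rw [hF.apply_exp_neg_self] at hmono
  have hlt : exp (log (Fstar F 1 1) - min t z) < 1 := exp_lt_one_iff.2 (by rw [← rF]; linarith)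
  linarith

end TF

theorem rpow_sub_mul_rpow_mul_rpow_le_of_le_of_le {r t T η a b : ℝ} (hr : 0 < r) (ht : 0 ≤ t)
    (htr : t ≤ r) (hrT : r ≤ T) (ha : 0 ≤ a) (hb : b ≤ 2 + η) :
    r ^ (2 + η - a - b) * (t ^ a * T ^ b) ≤ T ^ (2 + η) := by
  have hT : 0 ≤ T := hr.le.trans hrT
  calc r ^ (2 + η - a - b) * (t ^ a * T ^ b)
      ≤ r ^ (2 + η - a - b) * (r ^ a * T ^ b) := by gcongr
    _ = r ^ (2 + η - b) * T ^ b := by rw [← mul_assoc, ← rpow_add hr]; ring_nf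
    _ ≤ T ^ (2 + η - b) * T ^ b := by gcongr
    _ = T ^ (2 + η) := by rw [← rpow_add (hr.trans_le hrT)]; ring_nf

theorem rpow_sub_mul_rpow_mul_rpow_le_of_lt_of_le {r t T η a b : ℝ} (hr : 0 < r) (hrt : r < t)
    (hT : 0 ≤ T) (hTr : T ≤ r) (ha : a ≤ 1 + η) (hb : 1 ≤ b) :
    r ^ (2 + η - a - b) * (t ^ a * T ^ b) ≤ t ^ (1 + η) * T := by
  have ht : 0 < t := hr.trans hrt
  have hT_rpow : T ^ b = T ^ (b - 1) * T := by
    conv_lhs => rw [show b = (b - 1) + 1 by ring]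
    rw [rpow_add' hT (by linarith), rpow_one]
  calc r ^ (2 + η - a - b) * (t ^ a * T ^ b)
      = (r ^ (1 + η - a) * t ^ a) * (r ^ (1 - b) * T ^ (b - 1) * T) := by
        rw [hT_rpow, show 2 + η - a - b = (1 + η - a) + (1 - b) by ring, rpow_add hr]; ring
    _ ≤ (t ^ (1 + η - a) * t ^ a) * (r ^ (1 - b) * r ^ (b - 1) * T) := by
        gcongr
    _ = t ^ (1 + η) * T := by
        rw [← rpow_add (hr.trans hrt), ← rpow_add hr]; ring_nf; simp

theorem lintegral_rpow_mul_rpow_le {T : ℝ → ℝ} {r η a b : ℝ} (hr : 0 < r)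
    (hT_ge : ∀ t ∈ Ioc 0 r, r ≤ T t) (hT_nonneg : ∀ t, r < t → 0 ≤ T t)
    (hT_le : ∀ t, r < t → T t ≤ r) (ha0 : 0 ≤ a) (ha1 : a ≤ 1 + η) (hb1 : 1 ≤ b)
    (hb2 : b ≤ 2 + η) :
    ENNReal.ofReal (r ^ (2 + η - a - b)) * ∫⁻ t in Ioi 0, ENNReal.ofReal (t ^ a * T t ^ b) ≤
      (∫⁻ t in Ioi 0, ENNReal.ofReal (t ^ (1 + η) * T t)) +
        ∫⁻ t in Ioi 0, ENNReal.ofReal (T t ^ (2 + η)) := by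
  have hrpow : 0 ≤ r ^ (2 + η - a - b) := rpow_nonneg hr.le _
  rw [← lintegral_const_mul' _ _ ENNReal.ofReal_ne_top]
  conv_lhs => rw [← Ioc_union_Ioi_eq_Ioi hr.le]
  rw [lintegral_union measurableSet_Ioi (Ioc_disjoint_Ioi le_rfl), add_comm]
  gcongr ?_ + ?_
  · refine (setLIntegral_mono' measurableSet_Ioi fun t (ht : r < t) => ?_).trans
      (lintegral_mono_set (Ioi_subset_Ioi hr.le))
    rw [← ENNReal.ofReal_mul hrpow]
    exact ENNReal.ofReal_le_ofReal <| rpow_sub_mul_rpow_mul_rpow_le_of_lt_of_le hr ht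
      (hT_nonneg t ht) (hT_le t ht) ha1 hb1
  · refine (setLIntegral_mono' measurableSet_Ioc fun t ht => ?_).trans
      (lintegral_mono_set Ioc_subset_Ioi_self)
    rw [← ENNReal.ofReal_mul hrpow]
    exact ENNReal.ofReal_le_ofReal <| rpow_sub_mul_rpow_mul_rpow_le_of_le_of_le hr ht.1.le ht.2
      (hT_ge t ht) ha0 hb2

theorem stmt11_general (F : ℝ → ℝ → ℝ) (hF : HPlus F ∨ HMinus F) (η : ℝ)
    (hr : 0 < rF F) (a b : ℝ) (ha0 : 0 ≤ a) (ha1 : a ≤ 1 + η)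
    (hb1 : 1 ≤ b) (hb2 : b ≤ 2 + η) :
    Gamma F a b ≤
      2 * max (Gamma F (1 + η) 1) (Gamma F 0 (2 + η)) /
        ENNReal.ofReal (rF F ^ (2 + η - a - b)) := by
  have hFstar := weakHPlus_Fstar hF
  rw [ENNReal.le_div_iff_mul_le (Or.inl (ENNReal.ofReal_pos.2 (rpow_pos_of_pos hr _)).ne')
    (Or.inl ENNReal.ofReal_ne_top), mul_comm, two_mul]
  calc ENNReal.ofReal (rF F ^ (2 + η - a - b)) * Gamma F a b
      ≤ Gamma F (1 + η) 1 + Gamma F 0 (2 + η) := by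
        simpa only [_root_.Gamma, rpow_one, rpow_zero, one_mul] using
          lintegral_rpow_mul_rpow_le hr (fun t ht => rF_le_TF hFstar ht.1 ht.2)
            (fun t ht => TF_nonneg hFstar (hr.trans ht)) (fun t ht => TF_le_rF hFstar ht)
            ha0 ha1 hb1 hb2
    _ ≤ _ := add_le_add (le_max_left _ _) (le_max_right _ _)

/-- If r_F > 0 then for a ∈ [0,1+η], b ∈ [1,2+η]:
Γ_F^{(a,b)} ≤ 2 M_F^{(η)} / r_F^{2+η−a−b}, where M_F^{(η)} = max{Γ_F^{(1+η,1)}, Γ_F^{(0,2+η)}}. -/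
theorem stmt11 (F : ℝ → ℝ → ℝ) (hF : HPlus F ∨ HMinus F) (η : ℝ) (hη : 0 < η)
    (hr : 0 < rF F) (a b : ℝ) (ha0 : 0 ≤ a) (ha1 : a ≤ 1 + η)
    (hb1 : 1 ≤ b) (hb2 : b ≤ 2 + η) :
    Gamma F a b ≤
      2 * max (Gamma F (1 + η) 1) (Gamma F 0 (2 + η)) /
        ENNReal.ofReal (rF F ^ (2 + η - a - b)) :=
  stmt11_general F hF η hr a b ha0 ha1 hb1 hb2
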